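/- arXiv:2512.17825 — 6 statements merged into one kernel-verified Lean document; each statement's English description precedes it below -/
import Mathlib

section
/- Let f_s, f_r, k_r, g_p, k_l be positive reals, μ ≥ 0, 0 < q < 1, and m1, m2 real. Define D := (g_p + k_r + f_s(k_l − m1))² + 4 f_s((g_p + k_r)m1 − g_p k_l), b_s^e := (√D − g_p − k_r + f_s(m1 − k_l))/(2 f_s) and b_p^e := k_l(√D − g_p − k_r + f_s(m1 − k_l))/(√D + g_p + k_r + f_s(m1 − k_l)). Then (b_s^e, b_p^e, 0) is an equilibrium of the frozen autonomous system, i.e. F(b_s^e, b_p^e, 0) = (0,0,0). -/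
/-!
With no resistant cells (`b_r = 0`) the third component of `F` vanishes identically, the
persister equation `F_p = 0` gives `b_p = k_l f_s b_s / (f_s b_s + k_r + g_p)`, and substituting
this into `F_s = 0` leaves, for `b_s ≠ 0`, the quadratic
`f_s b_s² + (g_p + k_r - f_s (m1 - k_l)) b_s - ((g_p + k_r) m1 - g_p k_l) = 0`,
whose discriminant is `D`; `b_s^e` is its `+√D` root. Rewriting
`D = (g_p + k_r + f_s (m1 - k_l))² + 4 f_s k_l k_r` shows that `D > 0` and that the
denominator `f_s b_s^e + k_r + g_p = (√D + g_p + k_r + f_s (m1 - k_l)) / 2` is positive.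
-/

/-- The frozen autonomous vector field `F(b_s, b_p, b_r)` of the biofilm model. -/
noncomputable def frozenF (f_s f_r k_r g_p k_l μ q m1 m2 : ℝ) (b : ℝ × ℝ × ℝ) :
    ℝ × ℝ × ℝ :=
  ((m1 - k_l - b.1) * f_s * b.1 + k_r * b.2.1 - (μ + f_r) * b.2.2 * b.1 + q * f_r * b.2.2,
   (k_l - b.2.1) * f_s * b.1 - (k_r + g_p) * b.2.1 - f_r * b.2.2 * b.2.1,
   (m2 - q - b.2.2) * f_r * b.2.2 + (μ - f_r) * b.2.2 * b.1)

theorem frozenF_eq_zero_of_persister_balance {f_s f_r k_r g_p k_l μ q m1 m2 b_s b_p : ℝ}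
    (hden : f_s * b_s + k_r + g_p ≠ 0)
    (hbal : (f_s * b_s + k_r + g_p) * b_p = k_l * f_s * b_s)
    (hquad : f_s * (b_s * b_s) + (g_p + k_r - f_s * (m1 - k_l)) * b_s
      - ((g_p + k_r) * m1 - g_p * k_l) = 0) :
    frozenF f_s f_r k_r g_p k_l μ q m1 m2 (b_s, b_p, 0) = (0, 0, 0) := by
  simp only [frozenF, Prod.mk.injEq]
  refine ⟨?_, by linear_combination -hbal, by ring⟩
  refine mul_left_cancel₀ hden ?_
  linear_combination (-f_s * b_s) * hquad + k_r * hbal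

theorem stmt_1_general (f_s f_r k_r g_p k_l μ q m1 m2 : ℝ)
    (hfs : 0 < f_s) (hkr : 0 < k_r) (hkl : 0 < k_l) :
    let D := (g_p + k_r + f_s * (k_l - m1)) ^ 2 + 4 * f_s * ((g_p + k_r) * m1 - g_p * k_l)
    let bse := (Real.sqrt D - g_p - k_r + f_s * (m1 - k_l)) / (2 * f_s)
    let bpe := k_l * (Real.sqrt D - g_p - k_r + f_s * (m1 - k_l)) /
        (Real.sqrt D + g_p + k_r + f_s * (m1 - k_l))
    frozenF f_s f_r k_r g_p k_l μ q m1 m2 (bse, bpe, 0) = (0, 0, 0) := by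
  intro D bse bpe
  have hD : D = (g_p + k_r + f_s * (m1 - k_l)) ^ 2 + 4 * f_s * k_l * k_r := by
    simp only [D]; ring
  have hden : 0 < Real.sqrt D + g_p + k_r + f_s * (m1 - k_l) := by
    have hsqrt := Real.neg_sqrt_lt_of_sq_lt (x := g_p + k_r + f_s * (m1 - k_l)) (y := D)
      (by rw [hD]; exact lt_add_of_pos_right _ (by positivity))
    linarith
  have hfs_bse : f_s * bse + k_r + g_p = (Real.sqrt D + g_p + k_r + f_s * (m1 - k_l)) / 2 := by
    simp only [bse]; field_simp; ring
  have hdiscrim : discrim f_s (g_p + k_r - f_s * (m1 - k_l)) (-((g_p + k_r) * m1 - g_p * k_l))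
      = Real.sqrt D * Real.sqrt D := by
    rw [Real.mul_self_sqrt (by rw [hD]; positivity), discrim]; simp only [D]; ring
  refine frozenF_eq_zero_of_persister_balance (hfs_bse ▸ (half_pos hden).ne') ?_ ?_
  · rw [hfs_bse]; simp only [bse, bpe]; field_simp
  · rw [sub_eq_add_neg, quadratic_eq_zero_iff hfs.ne' hdiscrim]
    exact Or.inl (by simp only [bse]; ring)

/-- `(b_s^e, b_p^e, 0)` is an equilibrium of the frozen autonomous system. -/
theorem stmt_1 (f_s f_r k_r g_p k_l μ q m1 m2 : ℝ)
    (hfs : 0 < f_s) (hfr : 0 < f_r) (hkr : 0 < k_r) (hgp : 0 < g_p) (hkl : 0 < k_l)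
    (hμ : 0 ≤ μ) (hq0 : 0 < q) (hq1 : q < 1) :
    let D := (g_p + k_r + f_s * (k_l - m1)) ^ 2 + 4 * f_s * ((g_p + k_r) * m1 - g_p * k_l)
    let bse := (Real.sqrt D - g_p - k_r + f_s * (m1 - k_l)) / (2 * f_s)
    let bpe := k_l * (Real.sqrt D - g_p - k_r + f_s * (m1 - k_l)) /
        (Real.sqrt D + g_p + k_r + f_s * (m1 - k_l))
    frozenF f_s f_r k_r g_p k_l μ q m1 m2 (bse, bpe, 0) = (0, 0, 0) :=
  stmt_1_general f_s f_r k_r g_p k_l μ q m1 m2 hfs hkr hkl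
end

section
/- Let f_s, f_r, k_r, g_p, k_l be positive reals, μ ≥ 0, 0 < q < 1, and m1, m2 real. With D := (g_p + k_r + f_s(k_l − m1))² + 4 f_s((g_p + k_r)m1 − g_p k_l), b_s^e := (√D − g_p − k_r + f_s(m1 − k_l))/(2 f_s) and b_p^e := k_l(√D − g_p − k_r + f_s(m1 − k_l))/(√D + g_p + k_r + f_s(m1 − k_l)), one has b_s^e > 0 if and only if m1 > m1* := g_p k_l/(g_p + k_r); moreover if m1 > m1* then also b_p^e > 0, so the equilibrium (b_s^e, b_p^e, 0) of the frozen system is nontrivial precisely when m1 > m1*. -/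
/-- with `b_s^e, b_p^e` the coordinates of the persister–susceptible
equilibrium of the frozen system, `b_s^e > 0 ↔ m1 > m1* := g_p k_l/(g_p + k_r)`, and if
`m1 > m1*` then also `b_p^e > 0`, so the equilibrium `(b_s^e, b_p^e, 0)` is nontrivial
precisely when `m1 > m1*`. -/
theorem stmt_2 (f_s f_r k_r g_p k_l μ q m1 m2 : ℝ)
    (hfs : 0 < f_s) (hfr : 0 < f_r) (hkr : 0 < k_r) (hgp : 0 < g_p) (hkl : 0 < k_l)
    (hμ : 0 ≤ μ) (hq0 : 0 < q) (hq1 : q < 1) :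
    let D := (g_p + k_r + f_s * (k_l - m1)) ^ 2 + 4 * f_s * ((g_p + k_r) * m1 - g_p * k_l)
    let bse := (Real.sqrt D - g_p - k_r + f_s * (m1 - k_l)) / (2 * f_s)
    let bpe := k_l * (Real.sqrt D - g_p - k_r + f_s * (m1 - k_l)) /
        (Real.sqrt D + g_p + k_r + f_s * (m1 - k_l))
    let m1star := g_p * k_l / (g_p + k_r)
    (0 < bse ↔ m1 > m1star) ∧ (m1 > m1star → 0 < bpe) := by
  intro D bse bpe m1star
  have hgk : 0 < g_p + k_r := by linarith
  set A : ℝ := g_p + k_r + f_s * (k_l - m1) with hA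
  set E : ℝ := (g_p + k_r) * m1 - g_p * k_l with hEdef
  have hDdef : D = A ^ 2 + 4 * f_s * E := rfl
  have hstar : m1 > m1star ↔ 0 < E := by
    rw [gt_iff_lt, show m1star = g_p * k_l / (g_p + k_r) from rfl,
      div_lt_iff₀ hgk]
    constructor <;> intro h <;> nlinarith
  -- If E > 0 then |A| < sqrt D
  have key : 0 < E → |A| < Real.sqrt D := by
    intro hE
    have h1 : A ^ 2 < D := by nlinarith
    have := Real.sqrt_lt_sqrt (sq_nonneg A) h1
    rwa [Real.sqrt_sq_eq_abs] at this
  have hleA : A ≤ |A| := le_abs_self A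
  have hnegA : -|A| ≤ A := neg_abs_le A
  constructor
  · constructor
    · intro hb
      by_contra hm
      have hE : E ≤ 0 := by
        rcases le_or_gt E 0 with h | h
        · exact h
        · exact absurd (hstar.mpr h) hm
      -- A > 0 since m1 < k_l
      have hm1 : m1 ≤ m1star := le_of_not_gt hm
      have hm1k : m1 < k_l := by
        have : m1star < k_l := by
          rw [show m1star = g_p * k_l / (g_p + k_r) from rfl, div_lt_iff₀ hgk]
          nlinarith
        linarith
      have hApos : 0 < A := by
        rw [hA]; nlinarith
      have hDle : D ≤ A ^ 2 := by nlinarith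
      have hsq : Real.sqrt D ≤ A := by
        have := Real.sqrt_le_sqrt hDle
        rwa [Real.sqrt_sq hApos.le] at this
      have : bse ≤ 0 := by
        apply div_nonpos_of_nonpos_of_nonneg
        · show Real.sqrt D - g_p - k_r + f_s * (m1 - k_l) ≤ 0
          have : Real.sqrt D - g_p - k_r + f_s * (m1 - k_l) = Real.sqrt D - A := by
            rw [hA]; ring
          rw [this]; linarith
        · linarith
      linarith
    · intro hm
      have hE := hstar.mp hm
      have hk := key hE
      apply div_pos
      · show 0 < Real.sqrt D - g_p - k_r + f_s * (m1 - k_l)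
        have : Real.sqrt D - g_p - k_r + f_s * (m1 - k_l) = Real.sqrt D - A := by
          rw [hA]; ring
        rw [this]; linarith
      · linarith
  · intro hm
    have hE := hstar.mp hm
    have hk := key hE
    apply div_pos
    · show 0 < k_l * (Real.sqrt D - g_p - k_r + f_s * (m1 - k_l))
      have h1 : 0 < Real.sqrt D - g_p - k_r + f_s * (m1 - k_l) := by
        have : Real.sqrt D - g_p - k_r + f_s * (m1 - k_l) = Real.sqrt D - A := by
          rw [hA]; ring
        rw [this]; linarith
      positivity
    · show 0 < Real.sqrt D + g_p + k_r + f_s * (m1 - k_l)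
      have : Real.sqrt D + g_p + k_r + f_s * (m1 - k_l) =
          Real.sqrt D - A + 2 * (g_p + k_r) := by
        rw [hA]; ring
      rw [this]; linarith
end

section
/- Let f_s, f_r, k_r, g_p, k_l be positive reals, 0 < q < 1, and m1, m2 real. Set T := (m1 − k_l) f_s − (k_r + g_p), Δ₂ := −f_s((m1 − k_l)(k_r + g_p) + k_r k_l), and λ2 := (T + √(T² − 4Δ₂))/2. Then λ2 > 0 if and only if m1 > m1* := g_p k_l/(g_p + k_r) (Lemma 1, part 2). -/
/-- Lemma 1, part 2: the eigenvalue `λ2 = (T + √(T² − 4Δ₂))/2` of the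
Jacobian of the frozen system at the origin is positive iff `m1 > m1* = g_p k_l/(g_p + k_r)`. -/
theorem stmt_5 (f_s f_r k_r g_p k_l m1 m2 q : ℝ)
    (hfs : 0 < f_s) (hfr : 0 < f_r) (hkr : 0 < k_r) (hgp : 0 < g_p) (hkl : 0 < k_l)
    (hq0 : 0 < q) (hq1 : q < 1) :
    let T := (m1 - k_l) * f_s - (k_r + g_p)
    let Δ₂ := -(f_s * ((m1 - k_l) * (k_r + g_p) + k_r * k_l))
    let lam2 := (T + Real.sqrt (T ^ 2 - 4 * Δ₂)) / 2
    let m1star := g_p * k_l / (g_p + k_r)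
    0 < lam2 ↔ m1 > m1star := by
  intro T Δ₂ lam2 m1star
  unfold lam2 Δ₂ T m1star
  have hsum : 0 < g_p + k_r := by linarith
  set c : ℝ := (m1 - k_l) * (k_r + g_p) + k_r * k_l with hc
  set T' : ℝ := (m1 - k_l) * f_s - (k_r + g_p) with hT'
  have hiff : m1 > g_p * k_l / (g_p + k_r) ↔ 0 < c := by
    rw [gt_iff_lt, div_lt_iff₀ hsum, hc]
    constructor <;> intro h <;> nlinarith
  constructor
  · intro h
    rw [hiff]
    by_contra hcn
    push_neg at hcn
    have hΔ : 0 ≤ -(f_s * c) := by nlinarith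
    have hT : T' ≤ 0 := by
      by_contra hT
      push_neg at hT
      have h1 : 0 < (m1 - k_l) * f_s := by rw [hT'] at hT; linarith
      have h2 : 0 < m1 - k_l := by nlinarith
      nlinarith
    have hs : Real.sqrt (T' ^ 2 - 4 * -(f_s * c)) ≤ -T' := by
      have := Real.sqrt_le_sqrt (show T' ^ 2 - 4 * -(f_s * c) ≤ T' ^ 2 by linarith)
      rwa [Real.sqrt_sq_eq_abs, abs_of_nonpos hT] at this
    linarith
  · intro h
    have hcp := hiff.mp h
    have hΔ : -(f_s * c) < 0 := by nlinarith
    have hs : -T' < Real.sqrt (T' ^ 2 - 4 * -(f_s * c)) := by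
      calc -T' ≤ |T'| := neg_le_abs T'
        _ = Real.sqrt (T' ^ 2) := (Real.sqrt_sq_eq_abs T').symm
        _ < _ := Real.sqrt_lt_sqrt (sq_nonneg T') (by linarith)
    linarith
end

section
/- Let f_s, f_r, k_r, g_p, k_l be positive reals, μ ≥ 0, 0 < q < 1, and m1, m2 real. If (b_s, b_p, b_r) ∈ Δ is a zero of the frozen vector field F with b_s = 0, then b_p = 0 and b_r = 0. In particular, no steady state of the frozen system exists in which the resistant population persists while the susceptible population is extinct. -/
/-- The simplex `Δ` of admissible bacterial volume fractions. -/
def simplexΔ : Set (ℝ × ℝ × ℝ) :=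
  {b | 0 ≤ b.1 ∧ 0 ≤ b.2.1 ∧ 0 ≤ b.2.2 ∧ b.1 + b.2.1 + b.2.2 ≤ 1}

/-- any equilibrium of the frozen system in `Δ` with extinct susceptible
population (`b_s = 0`) has `b_p = 0` and `b_r = 0`: the resistant population cannot persist
while the susceptibles are extinct. -/
theorem stmt_10 (f_s f_r k_r g_p k_l μ q m1 m2 : ℝ)
    (hfs : 0 < f_s) (hfr : 0 < f_r) (hkr : 0 < k_r) (hgp : 0 < g_p) (hkl : 0 < k_l)
    (hμ : 0 ≤ μ) (hq0 : 0 < q) (hq1 : q < 1) :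
    ∀ b ∈ simplexΔ,
      frozenF f_s f_r k_r g_p k_l μ q m1 m2 b = (0, 0, 0) → b.1 = 0 →
        b.2.1 = 0 ∧ b.2.2 = 0 := by
  rintro ⟨bs, bp, br⟩ ⟨h1, h2, h3, h4⟩ heq hbs
  simp only [frozenF, Prod.mk.injEq] at heq
  obtain ⟨e1, e2, e3⟩ := heq
  subst hbs
  simp only [mul_zero, zero_mul, add_zero, zero_add, sub_zero, zero_sub] at e1 e2 e3 ⊢
  have hkp : 0 ≤ k_r * bp := mul_nonneg hkr.le h2
  have hqr : 0 ≤ q * f_r * br := mul_nonneg (mul_nonneg hq0.le hfr.le) h3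
  constructor
  · nlinarith
  · have h0 : q * f_r * br = 0 := by linarith
    have hqf : 0 < q * f_r := mul_pos hq0 hfr
    exact (mul_eq_zero.1 h0).resolve_left hqf.ne'
end

section
/- Let L > 0 and let v : ℝ → ℝ be continuously differentiable with v(0) = 0 and v(x) > 0 for all x ∈ (0, L]. Then there exists a continuously differentiable function s : (−∞, 0] → ℝ such that s(0) = L, s'(t) = v(s(t)) for all t ≤ 0, and s(t) ∈ (0, L] for all t ≤ 0. -/
/-!
The backward characteristic is the inverse of the travel time
`T x = ∫_L^x du / v(u)`, which is strictly increasing with derivative `1 / v` on an interval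
`(0, M)`, `M > L`, where `v > 0`. Since `v` is Lipschitz with `v 0 = 0`, `v u ≤ K u` near `0`,
so `T x ≤ K⁻¹ log (x / L) → -∞` as `x → 0⁺`: the flow never reaches the substratum in finite
time, and `T` maps `(0, L]` onto `(-∞, 0]`.
-/

open Set Filter Function Topology intervalIntegral

theorem HasStrictDerivAt.to_invFunOn {𝕜 : Type*} [NontriviallyNormedField 𝕜] [CompleteSpace 𝕜]
    {f : 𝕜 → 𝕜} {f' a : 𝕜} {s : Set 𝕜} (hf : HasStrictDerivAt f f' a) (hf' : f' ≠ 0)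
    (hs : s ∈ 𝓝 a) (hinj : InjOn f s) :
    HasStrictDerivAt (invFunOn f s) f'⁻¹ (f a) :=
  hf.to_local_left_inverse hf' (eventually_of_mem hs hinj.leftInvOn_invFunOn)

theorem ContinuousOn.integral_hasStrictDerivAt_of_mem {E : Type*} [NormedAddCommGroup E]
    [NormedSpace ℝ E] [CompleteSpace E] {f : ℝ → E} {s : Set ℝ} {a b : ℝ} (hs : IsOpen s)
    (hs' : s.OrdConnected) (hf : ContinuousOn f s) (ha : a ∈ s) (hb : b ∈ s) :
    HasStrictDerivAt (fun u => ∫ x in a..u, f x) (f b) b :=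
  integral_hasStrictDerivAt_right (hf.mono (hs'.uIcc_subset ha hb)).intervalIntegrable
    (hf.stronglyMeasurableAtFilter hs b hb) (hf.continuousAt (hs.mem_nhds hb))

theorem exists_gt_forall_mem_Ioo_pos {v : ℝ → ℝ} {L : ℝ} (hL : 0 < L) (hv : ContinuousAt v L)
    (hpos : ∀ x ∈ Ioc 0 L, 0 < v x) : ∃ M, L < M ∧ ∀ x ∈ Ioo 0 M, 0 < v x := by
  obtain ⟨l, u, ⟨hl, hu⟩, hsub⟩ :=
    mem_nhds_iff_exists_Ioo_subset.1 (hv.eventually (lt_mem_nhds (hpos L ⟨hL, le_rfl⟩)))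
  refine ⟨u, hu, fun x hx => ?_⟩
  rcases le_or_gt x L with hxL | hLx
  · exact hpos x ⟨hx.1, hxL⟩
  · exact hsub ⟨hl.trans hLx, hx.2⟩

noncomputable def characteristicTime (v : ℝ → ℝ) (L x : ℝ) : ℝ :=
  ∫ u in L..x, (v u)⁻¹

section characteristicTime

variable {v : ℝ → ℝ} {L : ℝ}

theorem characteristicTime_self : characteristicTime v L L = 0 :=
  integral_same

theorem hasStrictDerivAt_characteristicTime {a b x : ℝ} (hv : ContinuousOn v (Ioo a b))
    (hpos : ∀ x ∈ Ioo a b, 0 < v x) (hL : L ∈ Ioo a b) (hx : x ∈ Ioo a b) :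
    HasStrictDerivAt (characteristicTime v L) (v x)⁻¹ x :=
  (hv.inv₀ fun y hy => (hpos y hy).ne').integral_hasStrictDerivAt_of_mem isOpen_Ioo
    ordConnected_Ioo hL hx

theorem strictMonoOn_characteristicTime {a b : ℝ} (hv : ContinuousOn v (Ioo a b))
    (hpos : ∀ x ∈ Ioo a b, 0 < v x) (hL : L ∈ Ioo a b) :
    StrictMonoOn (characteristicTime v L) (Ioo a b) := by
  have hT x (hx : x ∈ Ioo a b) := hasStrictDerivAt_characteristicTime hv hpos hL hx
  refine strictMonoOn_of_deriv_pos (convex_Ioo a b)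
    (fun x hx => (hT x hx).hasDerivAt.continuousAt.continuousWithinAt) fun x hx => ?_
  rw [interior_Ioo] at hx
  rw [(hT x hx).hasDerivAt.deriv]
  exact inv_pos.2 (hpos x hx)

theorem log_div_le_integral_inv {K x : ℝ} (hx : x ∈ Ioo 0 L)
    (hv : ContinuousOn v (Ioc 0 L)) (hpos : ∀ u ∈ Ioc 0 L, 0 < v u)
    (hlin : ∀ u ∈ Ioc 0 L, v u ≤ K * u) :
    K⁻¹ * Real.log (L / x) ≤ ∫ u in x..L, (v u)⁻¹ := by
  have hsub : uIcc x L ⊆ Ioc 0 L := by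
    rw [uIcc_of_le hx.2.le]
    exact Icc_subset_Ioc hx.1 le_rfl
  have hint : IntervalIntegrable (fun u => (v u)⁻¹) MeasureTheory.volume x L :=
    ((hv.inv₀ fun u hu => (hpos u hu).ne').mono hsub).intervalIntegrable
  calc K⁻¹ * Real.log (L / x) = ∫ u in x..L, K⁻¹ * u⁻¹ := by
        rw [integral_const_mul, integral_inv_of_pos hx.1 (hx.1.trans hx.2)]
    _ ≤ ∫ u in x..L, (v u)⁻¹ := by
        refine integral_mono_on hx.2.le ?_ hint fun u hu => ?_
        · exact (continuousOn_const.mul (continuousOn_inv₀.mono fun u hu =>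
            (hsub hu).1.ne')).intervalIntegrable
        · have hu' : u ∈ Ioc 0 L := hsub (by rwa [uIcc_of_le hx.2.le])
          rw [← mul_inv]
          exact inv_anti₀ (hpos u hu') (hlin u hu')

theorem tendsto_characteristicTime_nhdsGT_zero {K : NNReal} (hL : 0 < L)
    (hpos : ∀ x ∈ Ioc 0 L, 0 < v x) (hlip : LipschitzOnWith K v (Icc 0 L)) (hv0 : v 0 = 0) :
    Tendsto (characteristicTime v L) (𝓝[>] 0) atBot := by
  have hlin : ∀ u ∈ Ioc 0 L, v u ≤ K * u := fun u hu => by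
    simpa [hv0, Real.dist_eq, abs_of_pos hu.1] using
      (le_abs_self _).trans (hlip.dist_le_mul u (Ioc_subset_Icc_self hu) 0 ⟨le_rfl, hL.le⟩)
  have hK : (0 : ℝ) < K :=
    pos_of_mul_pos_left ((hpos L ⟨hL, le_rfl⟩).trans_le (hlin L ⟨hL, le_rfl⟩)) hL.le
  have hlog : Tendsto (fun x => (K : ℝ)⁻¹ * (Real.log x + -Real.log L)) (𝓝[>] 0) atBot :=
    (tendsto_atBot_add_const_right _ _ Real.tendsto_log_nhdsGT_zero).const_mul_atBot
      (inv_pos.2 hK)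
  refine tendsto_atBot_mono' _ (eventually_of_mem (Ioo_mem_nhdsGT hL) fun x hx => ?_) hlog
  have := log_div_le_integral_inv hx (hlip.continuousOn.mono Ioc_subset_Icc_self) hpos hlin
  rw [Real.log_div hL.ne' hx.1.ne'] at this
  rw [characteristicTime, integral_symm]
  linarith

end characteristicTime

/-- for `L > 0` and a `C¹` velocity field `v` with `v(0) = 0` and `v > 0` on
`(0, L]`, the backward characteristic `s` with `s(0) = L`, `s'(t) = v(s(t))`, exists on all
of `(−∞, 0]` and stays in `(0, L]`. (It is continuously differentiable there since
`s' = v ∘ s` is continuous.) -/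
theorem stmt_15 (L : ℝ) (hL : 0 < L) (v : ℝ → ℝ) (hv : ContDiff ℝ 1 v)
    (hv0 : v 0 = 0) (hvpos : ∀ x ∈ Set.Ioc 0 L, 0 < v x) :
    ∃ s : ℝ → ℝ, s 0 = L ∧ (∀ t ≤ (0 : ℝ), HasDerivAt s (v (s t)) t) ∧
      ∀ t ≤ (0 : ℝ), s t ∈ Set.Ioc 0 L := by
  obtain ⟨M, hLM, hvM⟩ := exists_gt_forall_mem_Ioo_pos hL hv.continuous.continuousAt hvpos
  have hL' : L ∈ Ioo 0 M := ⟨hL, hLM⟩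
  set T := characteristicTime v L
  have hT x (hx : x ∈ Ioo 0 M) : HasStrictDerivAt T (v x)⁻¹ x :=
    hasStrictDerivAt_characteristicTime hv.continuous.continuousOn hvM hL' hx
  have hmono : StrictMonoOn T (Ioo 0 M) :=
    strictMonoOn_characteristicTime hv.continuous.continuousOn hvM hL'
  have hTL : T L = 0 := characteristicTime_self
  have hsurj : Iic 0 ⊆ T '' Ioo 0 M := fun t ht => by
    obtain ⟨K, hK⟩ :=
      hv.contDiffOn.exists_lipschitzOnWith one_ne_zero (convex_Icc 0 L) isCompact_Icc
    obtain ⟨x, hxt, hx⟩ := (((tendsto_characteristicTime_nhdsGT_zero hL hvpos hK hv0).eventually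
      (eventually_le_atBot t)).and (Ioo_mem_nhdsGT hL)).exists
    have hsub : Icc x L ⊆ Ioo 0 M := Icc_subset_Ioo hx.1 hLM
    have hTc : ContinuousOn T (Icc x L) := fun y hy =>
      (hT y (hsub hy)).hasDerivAt.continuousAt.continuousWithinAt
    exact image_mono hsub <| intermediate_value_Icc hx.2.le hTc ⟨hxt, hTL ▸ ht⟩
  have hinv := hmono.injOn.leftInvOn_invFunOn
  refine ⟨invFunOn T (Ioo 0 M), hTL ▸ hinv hL', fun t ht => ?_,
    fun t ht => ?_⟩ <;> obtain ⟨x, hx, rfl⟩ := hsurj ht <;> rw [hinv hx]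
  · simpa using ((hT x hx).to_invFunOn (inv_ne_zero (hvM x hx).ne') (isOpen_Ioo.mem_nhds hx)
      hmono.injOn).hasDerivAt
  · exact ⟨hx.1, (hmono.le_iff_le hx hL').1 (hTL ▸ ht)⟩
end

section
/- Let α* := max{ν_s/L_s, ν_p/L_p, ν_r/L_r} (so that p_i(A) ≤ α*·A for all A ≥ 0 and i = s, p, r), let φ_a* := √(α*/D_A) and g*(K) := f_s(K) + f_r(K). If the applied antibiotic dose U satisfies U ≥ cosh(φ_a*·g*(K)/σ)/min(k_d, k_d^r), then for every L > 0 there is no continuous nontrivial steady state of the biofilm system on [0, L] with A(L) = U; i.e. only the trivial disinfection state with L = 0 exists, so the sufficient-dose threshold u2 of Theorem 3 satisfies u2 ≤ cosh(φ_a*·g*(K)/σ)/min(k_d, k_d^r) (Theorem 3, part 2). -/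
/-- Parameters of the biofilm model: maximum growth rates `αs, αr`, antibiotic uptake
rates `νs, νp, νr`, half-saturation constants `Ls, Lp, Lr, L'`, persister reversion
rates `kr0` (no antibiotic) and `kr1` (antibiotic present), killing rates `kd, kdr, kdp`,
conversion rate `kl`, detachment constant `σ`, diffusivities `DA, DC`, bulk nutrient
level `K`, conjugation rate `μ` and mis-segregation rate `q`. -/
structure BiofilmParams where
  αs : ℝ
  αr : ℝ
  νs : ℝ
  νp : ℝ
  νr : ℝ
  Ls : ℝ
  Lp : ℝ
  Lr : ℝ
  L' : ℝ
  kr0 : ℝ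
  kr1 : ℝ
  kd : ℝ
  kdr : ℝ
  kdp : ℝ
  kl : ℝ
  σ : ℝ
  DA : ℝ
  DC : ℝ
  K : ℝ
  μ : ℝ
  q : ℝ
  hαs : 0 < αs
  hαr : 0 < αr
  hνs : 0 < νs
  hνp : 0 < νp
  hνr : 0 < νr
  hLs : 0 < Ls
  hLp : 0 < Lp
  hLr : 0 < Lr
  hL' : 0 < L'
  hkr0 : 0 < kr0
  hkr1 : 0 < kr1
  hkd : 0 < kd
  hkdr : 0 < kdr
  hkdp : 0 < kdp
  hkl : 0 < kl
  hσ : 0 < σ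
  hDA : 0 < DA
  hDC : 0 < DC
  hK : 0 < K
  hμ : 0 ≤ μ
  hq0 : 0 < q
  hq1 : q < 1

namespace BiofilmParams

variable (P : BiofilmParams)

/-- Growth rate of susceptible bacteria `f_s(C) = α_s C/(L_s + C)`. -/
noncomputable def fs (c : ℝ) : ℝ := P.αs * c / (P.Ls + c)

/-- Growth rate of resistant bacteria `f_r(C) = α_r C/(L_r + C)`. -/
noncomputable def fr (c : ℝ) : ℝ := P.αr * c / (P.Lr + c)

/-- Killing rate of persisters `g_p(A) = k_d^p A/(L' + A)`. -/
noncomputable def gp (a : ℝ) : ℝ := P.kdp * a / (P.L' + a)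

/-- Antibiotic consumption by susceptibles `p_s(A) = ν_s A/(L_s + A)`. -/
noncomputable def ps (a : ℝ) : ℝ := P.νs * a / (P.Ls + a)

/-- Antibiotic consumption by persisters `p_p(A) = ν_p A/(L_p + A)`. -/
noncomputable def pp (a : ℝ) : ℝ := P.νp * a / (P.Lp + a)

/-- Antibiotic consumption by resisters `p_r(A) = ν_r A/(L_r + A)`. -/
noncomputable def pr (a : ℝ) : ℝ := P.νr * a / (P.Lr + a)

/-- Persister reversion rate `k_r(A)`: `k_r^0` if `A = 0`, `k_r^1` otherwise. -/
noncomputable def krA (a : ℝ) : ℝ := if a = 0 then P.kr0 else P.kr1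

end BiofilmParams

/-- A continuous steady state of the biofilm system on `[0, L]` with applied dose
`A(L) = U`: nonnegative functions summing to `1`, satisfying the steady-state
advection/diffusion–reaction equations on `(0, L)` together with the boundary
conditions at `x = 0` and `x = L`. -/
structure IsSteadyState (P : BiofilmParams) (L U : ℝ)
    (Bs Bp Br Bd A C v : ℝ → ℝ) : Prop where
  nonneg_Bs : ∀ x ∈ Set.Icc 0 L, 0 ≤ Bs x
  nonneg_Bp : ∀ x ∈ Set.Icc 0 L, 0 ≤ Bp x
  nonneg_Br : ∀ x ∈ Set.Icc 0 L, 0 ≤ Br x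
  nonneg_Bd : ∀ x ∈ Set.Icc 0 L, 0 ≤ Bd x
  nonneg_A : ∀ x ∈ Set.Icc 0 L, 0 ≤ A x
  nonneg_C : ∀ x ∈ Set.Icc 0 L, 0 ≤ C x
  nonneg_v : ∀ x ∈ Set.Icc 0 L, 0 ≤ v x
  sum_one : ∀ x ∈ Set.Icc 0 L, Bs x + Bp x + Br x + Bd x = 1
  cont_Bs : ContinuousOn Bs (Set.Icc 0 L)
  cont_Bp : ContinuousOn Bp (Set.Icc 0 L)
  cont_Br : ContinuousOn Br (Set.Icc 0 L)
  cont_Bd : ContinuousOn Bd (Set.Icc 0 L)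
  diff_vBs : ∀ x ∈ Set.Icc 0 L, DifferentiableAt ℝ (fun y => v y * Bs y) x
  diff_vBp : ∀ x ∈ Set.Icc 0 L, DifferentiableAt ℝ (fun y => v y * Bp y) x
  diff_vBr : ∀ x ∈ Set.Icc 0 L, DifferentiableAt ℝ (fun y => v y * Br y) x
  diff_vBd : ∀ x ∈ Set.Icc 0 L, DifferentiableAt ℝ (fun y => v y * Bd y) x
  diff_v : ∀ x ∈ Set.Icc 0 L, DifferentiableAt ℝ v x
  diff_A : ∀ x ∈ Set.Icc 0 L, DifferentiableAt ℝ A x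
  diff_A' : ∀ x ∈ Set.Icc 0 L, DifferentiableAt ℝ (deriv A) x
  diff_C : ∀ x ∈ Set.Icc 0 L, DifferentiableAt ℝ C x
  diff_C' : ∀ x ∈ Set.Icc 0 L, DifferentiableAt ℝ (deriv C) x
  eq_Bs : ∀ x ∈ Set.Ioo 0 L, deriv (fun y => v y * Bs y) x =
    (1 - P.kd * A x - P.kl) * P.fs (C x) * Bs x + P.krA (A x) * Bp x
      - P.μ * Br x * Bs x + P.q * P.fr (C x) * Br x
  eq_Bp : ∀ x ∈ Set.Ioo 0 L, deriv (fun y => v y * Bp y) x =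
    P.kl * P.fs (C x) * Bs x - P.krA (A x) * Bp x - P.gp (A x) * Bp x
  eq_Br : ∀ x ∈ Set.Ioo 0 L, deriv (fun y => v y * Br y) x =
    (1 - P.kdr * A x - P.q) * P.fr (C x) * Br x + P.μ * Br x * Bs x
  eq_Bd : ∀ x ∈ Set.Ioo 0 L, deriv (fun y => v y * Bd y) x =
    P.kd * A x * P.fs (C x) * Bs x + P.kdr * A x * P.fr (C x) * Br x + P.gp (A x) * Bp x
  eq_A : ∀ x ∈ Set.Ioo 0 L, P.DA * deriv (deriv A) x =
    P.ps (A x) * Bs x + P.pp (A x) * Bp x + P.pr (A x) * Br x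
  eq_C : ∀ x ∈ Set.Ioo 0 L, P.DC * deriv (deriv C) x =
    P.fs (C x) * Bs x + P.fr (C x) * Br x
  eq_v : ∀ x ∈ Set.Ioo 0 L, deriv v x = P.fs (C x) * Bs x + P.fr (C x) * Br x
  bc_Bs : deriv Bs 0 = 0
  bc_Bp : deriv Bp 0 = 0
  bc_Br : deriv Br 0 = 0
  bc_Bd : deriv Bd 0 = 0
  bc_A' : deriv A 0 = 0
  bc_AL : A L = U
  bc_C' : deriv C 0 = 0
  bc_CL : C L = P.K
  bc_v0 : v 0 = 0
  bc_vL : v L = P.σ * L ^ 2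

/-- A steady state is nontrivial if the live bacterial fraction `B_s + B_p + B_r` is not
identically zero on `[0, L]`. -/
def NontrivialState (L : ℝ) (Bs Bp Br : ℝ → ℝ) : Prop :=
  ∃ x ∈ Set.Icc 0 L, Bs x + Bp x + Br x ≠ 0

/-!
The nutrient `C` is convex with `C'(0) = 0`, so `C ≤ K`; hence the growth velocity satisfies
`v' ≤ g*(K)` and `σL² = v(L) ≤ g*(K) L`, i.e. the biofilm is at most `g*(K)/σ` thick. Since
`p_i(A) ≤ α* A`, the antibiotic satisfies `A'' ≤ φ_a*² A`, and a minimum principle compares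
it with `U cosh(φ_a* x)/cosh(φ_a* L)`; on so thin a film this gives `A ≥ 1/min(k_d, k_d^r)`
everywhere. Then killing outweighs growth: the live flux `v (B_s + B_p + B_r)` is nonincreasing,
vanishes at `0` and is nonnegative, so it vanishes, which forces `(v²)' = 2 v v' = 0` and
contradicts `v(L) = σL² > 0`.
-/

open Set

section Calculus

variable {f w w' w'' : ℝ → ℝ} {a b M : ℝ}

theorem image_sub_le_mul_sub_of_deriv_le_Icc (hf : ∀ x ∈ Icc a b, DifferentiableAt ℝ f x)
    (hf' : ∀ x ∈ Ioo a b, deriv f x ≤ M) :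
    ∀ x ∈ Icc a b, ∀ y ∈ Icc a b, x ≤ y → f y - f x ≤ M * (y - x) :=
  (convex_Icc a b).image_sub_le_mul_sub_of_deriv_le
    (fun x hx => (hf x hx).continuousAt.continuousWithinAt)
    (by rw [interior_Icc]; exact fun x hx => (hf x (Ioo_subset_Icc_self hx)).differentiableWithinAt)
    (by rwa [interior_Icc])

theorem mul_sub_le_image_sub_of_le_deriv_Icc (hf : ∀ x ∈ Icc a b, DifferentiableAt ℝ f x)
    (hf' : ∀ x ∈ Ioo a b, M ≤ deriv f x) :
    ∀ x ∈ Icc a b, ∀ y ∈ Icc a b, x ≤ y → M * (y - x) ≤ f y - f x :=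
  (convex_Icc a b).mul_sub_le_image_sub_of_le_deriv
    (fun x hx => (hf x hx).continuousAt.continuousWithinAt)
    (by rw [interior_Icc]; exact fun x hx => (hf x (Ioo_subset_Icc_self hx)).differentiableWithinAt)
    (by rwa [interior_Icc])

theorem strictAntiOn_Icc_of_hasDerivAt_neg (hw : ∀ x ∈ Icc a b, HasDerivAt w (w' x) x)
    (hw' : ∀ x ∈ Ioo a b, w' x < 0) : StrictAntiOn w (Icc a b) :=
  strictAntiOn_of_deriv_neg (convex_Icc a b)
    (fun x hx => (hw x hx).continuousAt.continuousWithinAt)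
    (by rw [interior_Icc]; exact fun x hx => (hw x (Ioo_subset_Icc_self hx)).deriv ▸ hw' x hx)

theorem lt_of_hasDerivAt_eq_zero_of_second_deriv_neg (hab : a < b)
    (hw : ∀ x ∈ Icc a b, HasDerivAt w (w' x) x) (hw' : ∀ x ∈ Icc a b, HasDerivAt w' (w'' x) x)
    (ha : w' a = 0) (hw'' : ∀ x ∈ Ioo a b, w'' x < 0) : w b < w a := by
  have hw'_anti := strictAntiOn_Icc_of_hasDerivAt_neg hw' hw''
  have hw_anti : StrictAntiOn w (Icc a b) := strictAntiOn_Icc_of_hasDerivAt_neg hw fun x hx =>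
    ha ▸ hw'_anti (left_mem_Icc.2 hab.le) (Ioo_subset_Icc_self hx) hx.1
  exact hw_anti (left_mem_Icc.2 hab.le) (right_mem_Icc.2 hab.le) hab

/-- A minimum principle: a negative minimum would be a critical point (an interior one, or the
left end where `w' = 0`) near which `w` is strictly concave, so `w` would drop below it. -/
theorem nonneg_of_second_deriv_neg_of_neg (hw : ∀ x ∈ Icc a b, HasDerivAt w (w' x) x)
    (hw' : ∀ x ∈ Icc a b, HasDerivAt w' (w'' x) x)
    (hconcave : ∀ x ∈ Ioo a b, w x < 0 → w'' x < 0) (ha : w' a = 0) (hb : 0 ≤ w b) :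
    ∀ x ∈ Icc a b, 0 ≤ w x := by
  by_contra! ⟨x₀, hx₀, hwx₀⟩
  obtain ⟨s, hs, hmin⟩ := isCompact_Icc.exists_isMinOn ⟨x₀, hx₀⟩
    fun x hx => (hw x hx).continuousAt.continuousWithinAt
  have hws : w s < 0 := (hmin hx₀).trans_lt hwx₀
  have hsb : s < b := hs.2.lt_of_ne (by rintro rfl; linarith)
  have hcrit : w' s = 0 := by
    rcases hs.1.eq_or_lt with rfl | has
    · exact ha
    · exact (hmin.isLocalMin (Icc_mem_nhds has hsb)).hasDerivAt_eq_zero (hw s hs)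
  obtain ⟨u, hu, hneg⟩ := exists_Ico_subset_of_mem_nhds'
    ((hw s hs).continuousAt.eventually_lt continuousAt_const hws) hsb
  have hst : s < (s + u) / 2 := by linarith [hu.1]
  have hsub : Icc s ((s + u) / 2) ⊆ Icc a b := Icc_subset_Icc hs.1 (by linarith [hu.2])
  have hdrop := lt_of_hasDerivAt_eq_zero_of_second_deriv_neg hst (fun x hx => hw x (hsub hx))
    (fun x hx => hw' x (hsub hx)) hcrit fun x hx =>
      hconcave x ⟨hs.1.trans_lt hx.1, hx.2.trans_le (hsub (right_mem_Icc.2 hst.le)).2⟩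
        (hneg ⟨hx.1.le, by linarith [hx.2]⟩)
  exact (hmin (hsub (right_mem_Icc.2 hst.le))).not_gt hdrop

/-- `U cosh(φx)/cosh(φL)` solves `w'' = φ² w`, `w'(0) = 0`, `w(L) = U`. -/
theorem mul_cosh_div_cosh_le {A : ℝ → ℝ} {L U φ : ℝ} (hφ : φ ≠ 0)
    (hA : ∀ x ∈ Icc 0 L, DifferentiableAt ℝ A x)
    (hA' : ∀ x ∈ Icc 0 L, DifferentiableAt ℝ (deriv A) x)
    (hA'' : ∀ x ∈ Ioo 0 L, deriv (deriv A) x ≤ φ ^ 2 * A x)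
    (hA'0 : deriv A 0 = 0) (hAL : A L = U) :
    ∀ x ∈ Icc 0 L, U * Real.cosh (φ * x) / Real.cosh (φ * L) ≤ A x := by
  set c := U / Real.cosh (φ * L)
  have hlin (x : ℝ) : HasDerivAt (fun y => φ * y) φ x := by
    simpa using (hasDerivAt_id x).const_mul φ
  have hφ2 : 0 < φ ^ 2 := by positivity
  have key := nonneg_of_second_deriv_neg_of_neg (w := fun x => A x - c * Real.cosh (φ * x))
    (w' := fun x => deriv A x - c * (Real.sinh (φ * x) * φ))
    (w'' := fun x => deriv (deriv A) x - c * (Real.cosh (φ * x) * φ * φ))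
    (fun x hx => (hA x hx).hasDerivAt.sub (((hlin x).cosh).const_mul c))
    (fun x hx => (hA' x hx).hasDerivAt.sub ((((hlin x).sinh).mul_const φ).const_mul c))
    (fun x hx hneg => by nlinarith [hA'' x hx, mul_neg_of_pos_of_neg hφ2 hneg])
    (by simp [hA'0])
    (by simp [c, hAL, (Real.cosh_pos _).ne'])
  intro x hx
  have := key x hx
  rw [mul_div_right_comm]
  linarith

end Calculus

theorem michaelisMenten_nonneg {ν κ a : ℝ} (hν : 0 ≤ ν) (hκ : 0 ≤ κ) (ha : 0 ≤ a) :
    0 ≤ ν * a / (κ + a) :=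
  div_nonneg (mul_nonneg hν ha) (by linarith)

theorem michaelisMenten_mono {ν κ a b : ℝ} (hν : 0 ≤ ν) (hκ : 0 < κ) (ha : 0 ≤ a)
    (hab : a ≤ b) : ν * a / (κ + a) ≤ ν * b / (κ + b) := by
  rw [div_le_div_iff₀ (by linarith) (by linarith)]
  nlinarith [mul_le_mul_of_nonneg_left hab (mul_nonneg hν hκ.le)]

theorem michaelisMenten_le_linear {ν κ a : ℝ} (hν : 0 ≤ ν) (hκ : 0 < κ) (ha : 0 ≤ a) :
    ν * a / (κ + a) ≤ ν / κ * a := by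
  rw [div_mul_eq_mul_div]
  exact div_le_div_of_nonneg_left (mul_nonneg hν ha) hκ (by linarith)

namespace IsSteadyState

variable {P : BiofilmParams} {L U : ℝ} {Bs Bp Br Bd A C v : ℝ → ℝ}

theorem fs_nonneg (ss : IsSteadyState P L U Bs Bp Br Bd A C v) {x : ℝ} (hx : x ∈ Icc 0 L) :
    0 ≤ P.fs (C x) :=
  michaelisMenten_nonneg P.hαs.le P.hLs.le (ss.nonneg_C x hx)

theorem fr_nonneg (ss : IsSteadyState P L U Bs Bp Br Bd A C v) {x : ℝ} (hx : x ∈ Icc 0 L) :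
    0 ≤ P.fr (C x) :=
  michaelisMenten_nonneg P.hαr.le P.hLr.le (ss.nonneg_C x hx)

theorem live_le_one (ss : IsSteadyState P L U Bs Bp Br Bd A C v) {x : ℝ} (hx : x ∈ Icc 0 L) :
    Bs x + Bp x + Br x ≤ 1 := by
  linarith [ss.sum_one x hx, ss.nonneg_Bd x hx]

theorem C_le_K (ss : IsSteadyState P L U Bs Bp Br Bd A C v) : ∀ x ∈ Icc 0 L, C x ≤ P.K := by
  have hC'' : ∀ x ∈ Ioo 0 L, 0 ≤ deriv (deriv C) x := fun x hx => by
    have hx' := Ioo_subset_Icc_self hx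
    have : 0 ≤ P.DC * deriv (deriv C) x := ss.eq_C x hx ▸ add_nonneg
      (mul_nonneg (ss.fs_nonneg hx') (ss.nonneg_Bs x hx'))
      (mul_nonneg (ss.fr_nonneg hx') (ss.nonneg_Br x hx'))
    exact nonneg_of_mul_nonneg_right (by linarith) P.hDC
  have hC' : ∀ x ∈ Ioo 0 L, 0 ≤ deriv C x := fun x hx => by
    have := mul_sub_le_image_sub_of_le_deriv_Icc ss.diff_C' hC'' 0
      (left_mem_Icc.2 (hx.1.trans hx.2).le) x (Ioo_subset_Icc_self hx) hx.1.le
    linarith [ss.bc_C']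
  intro x hx
  have := mul_sub_le_image_sub_of_le_deriv_Icc ss.diff_C hC' x hx L
    (right_mem_Icc.2 (hx.1.trans hx.2)) hx.2
  linarith [ss.bc_CL]

theorem deriv_v_le (ss : IsSteadyState P L U Bs Bp Br Bd A C v) :
    ∀ x ∈ Ioo 0 L, deriv v x ≤ P.fs P.K + P.fr P.K := by
  intro x hx
  have hx' := Ioo_subset_Icc_self hx
  have hfs : P.fs (C x) ≤ P.fs P.K :=
    michaelisMenten_mono P.hαs.le P.hLs (ss.nonneg_C x hx') (ss.C_le_K x hx')
  have hfr : P.fr (C x) ≤ P.fr P.K :=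
    michaelisMenten_mono P.hαr.le P.hLr (ss.nonneg_C x hx') (ss.C_le_K x hx')
  have hBs : Bs x ≤ 1 := by linarith [ss.live_le_one hx', ss.nonneg_Bp x hx', ss.nonneg_Br x hx']
  have hBr : Br x ≤ 1 := by linarith [ss.live_le_one hx', ss.nonneg_Bp x hx', ss.nonneg_Bs x hx']
  rw [ss.eq_v x hx]
  nlinarith [ss.fs_nonneg hx', ss.fr_nonneg hx', ss.nonneg_Bs x hx', ss.nonneg_Br x hx']

theorem L_le_div_σ (ss : IsSteadyState P L U Bs Bp Br Bd A C v) (hL : 0 < L) :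
    L ≤ (P.fs P.K + P.fr P.K) / P.σ := by
  have := image_sub_le_mul_sub_of_deriv_le_Icc ss.diff_v ss.deriv_v_le 0
    (left_mem_Icc.2 hL.le) L (right_mem_Icc.2 hL.le) hL.le
  rw [ss.bc_vL, ss.bc_v0] at this
  rw [le_div_iff₀ P.hσ]
  nlinarith

theorem deriv_deriv_A_le (ss : IsSteadyState P L U Bs Bp Br Bd A C v) :
    ∀ x ∈ Ioo 0 L, deriv (deriv A) x ≤
      max (P.νs / P.Ls) (max (P.νp / P.Lp) (P.νr / P.Lr)) / P.DA * A x := by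
  intro x hx
  set α := max (P.νs / P.Ls) (max (P.νp / P.Lp) (P.νr / P.Lr))
  have hx' := Ioo_subset_Icc_self hx
  have hA := ss.nonneg_A x hx'
  have uptake_le {ν κ : ℝ} (hν : 0 < ν) (hκ : 0 < κ) (hα : ν / κ ≤ α) {B : ℝ} (hB : 0 ≤ B) :
      ν * A x / (κ + A x) * B ≤ α * A x * B :=
    mul_le_mul_of_nonneg_right
      ((michaelisMenten_le_linear hν.le hκ hA).trans (mul_le_mul_of_nonneg_right hα hA)) hB
  have hs := uptake_le P.hνs P.hLs (le_max_left _ _) (ss.nonneg_Bs x hx')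
  have hp := uptake_le P.hνp P.hLp ((le_max_left _ _).trans (le_max_right _ _))
    (ss.nonneg_Bp x hx')
  have hr := uptake_le P.hνr P.hLr ((le_max_right _ _).trans (le_max_right _ _))
    (ss.nonneg_Br x hx')
  have hαA : 0 ≤ α * A x := mul_nonneg ((div_pos P.hνs P.hLs).le.trans (le_max_left _ _)) hA
  have hlive := mul_le_mul_of_nonneg_left (ss.live_le_one hx') hαA
  have hDA := ss.eq_A x hx
  simp only [BiofilmParams.ps, BiofilmParams.pp, BiofilmParams.pr] at hDA
  rw [div_mul_eq_mul_div, le_div_iff₀ P.hDA]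
  nlinarith

theorem div_cosh_le_A (ss : IsSteadyState P L U Bs Bp Br Bd A C v) {φ : ℝ} (hφ : φ ≠ 0)
    (hU : 0 ≤ U) (hA'' : ∀ x ∈ Ioo 0 L, deriv (deriv A) x ≤ φ ^ 2 * A x) :
    ∀ x ∈ Icc 0 L, U / Real.cosh (φ * L) ≤ A x := fun x hx =>
  (div_le_div_of_nonneg_right (le_mul_of_one_le_right hU (Real.one_le_cosh _))
    (Real.cosh_pos _).le).trans
    (mul_cosh_div_cosh_le hφ ss.diff_A ss.diff_A' hA'' ss.bc_A' ss.bc_AL x hx)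

theorem v_mul_eq_zero_of_killing (ss : IsSteadyState P L U Bs Bp Br Bd A C v)
    (hkill : ∀ x ∈ Ioo 0 L, 1 ≤ P.kd * A x ∧ 1 ≤ P.kdr * A x) :
    ∀ x ∈ Icc 0 L, v x * Bs x = 0 ∧ v x * Br x = 0 := by
  set W : ℝ → ℝ := fun y => v y * Bs y + v y * Bp y + v y * Br y
  have hW : ∀ x ∈ Icc 0 L, HasDerivAt W (deriv (fun y => v y * Bs y) x
      + deriv (fun y => v y * Bp y) x + deriv (fun y => v y * Br y) x) x := fun x hx =>
    ((ss.diff_vBs x hx).hasDerivAt.add (ss.diff_vBp x hx).hasDerivAt).add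
      (ss.diff_vBr x hx).hasDerivAt
  have hW' : ∀ x ∈ Ioo 0 L, deriv W x ≤ 0 := fun x hx => by
    have hx' := Ioo_subset_Icc_self hx
    rw [(hW x hx').deriv, ss.eq_Bs x hx, ss.eq_Bp x hx, ss.eq_Br x hx]
    have hs := mul_nonneg (sub_nonneg.2 (hkill x hx).1)
      (mul_nonneg (ss.fs_nonneg hx') (ss.nonneg_Bs x hx'))
    have hr := mul_nonneg (sub_nonneg.2 (hkill x hx).2)
      (mul_nonneg (ss.fr_nonneg hx') (ss.nonneg_Br x hx'))
    have hp := mul_nonneg (michaelisMenten_nonneg P.hkdp.le P.hL'.le (ss.nonneg_A x hx'))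
      (ss.nonneg_Bp x hx')
    simp only [BiofilmParams.gp] at hp ⊢
    nlinarith
  intro x hx
  have hle := image_sub_le_mul_sub_of_deriv_le_Icc (fun y hy => (hW y hy).differentiableAt) hW'
    0 (left_mem_Icc.2 (hx.1.trans hx.2)) x hx hx.1
  have hv := ss.nonneg_v x hx
  have hs := mul_nonneg hv (ss.nonneg_Bs x hx)
  have hp := mul_nonneg hv (ss.nonneg_Bp x hx)
  have hr := mul_nonneg hv (ss.nonneg_Br x hx)
  simp only [W, ss.bc_v0, zero_mul, add_zero, sub_zero] at hle
  constructor <;> linarith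

theorem false_of_killing (ss : IsSteadyState P L U Bs Bp Br Bd A C v) (hL : 0 < L)
    (hkill : ∀ x ∈ Ioo 0 L, 1 ≤ P.kd * A x ∧ 1 ≤ P.kdr * A x) : False := by
  have hflux := ss.v_mul_eq_zero_of_killing hkill
  have hv2 : ∀ x ∈ Icc 0 L, HasDerivAt (fun y => v y * v y) (deriv v x * v x + v x * deriv v x) x :=
    fun x hx => (ss.diff_v x hx).hasDerivAt.mul (ss.diff_v x hx).hasDerivAt
  have hv2' : ∀ x ∈ Ioo 0 L, deriv (fun y => v y * v y) x ≤ 0 := fun x hx => by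
    have hvv : v x * deriv v x = P.fs (C x) * (v x * Bs x) + P.fr (C x) * (v x * Br x) := by
      rw [ss.eq_v x hx]; ring
    rw [(hv2 x (Ioo_subset_Icc_self hx)).deriv, mul_comm (deriv v x), hvv,
      (hflux x (Ioo_subset_Icc_self hx)).1, (hflux x (Ioo_subset_Icc_self hx)).2]
    simp
  have := image_sub_le_mul_sub_of_deriv_le_Icc (fun y hy => (hv2 y hy).differentiableAt) hv2'
    0 (left_mem_Icc.2 hL.le) L (right_mem_Icc.2 hL.le) hL.le
  rw [ss.bc_vL, ss.bc_v0] at this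
  nlinarith [mul_pos P.hσ (pow_pos hL 2)]

end IsSteadyState

/-- Theorem 3, part 2: with `α* := max{ν_s/L_s, ν_p/L_p, ν_r/L_r}`,
`φ_a* := √(α*/D_A)` and `g*(K) := f_s(K) + f_r(K)`, if the applied dose satisfies
`U ≥ cosh(φ_a* g*(K)/σ)/min(k_d, k_d^r)`, then for every `L > 0` there is no continuous
nontrivial steady state on `[0, L]` with `A(L) = U`: only the trivial disinfection state
with `L = 0` exists, so the sufficient-dose threshold `u2` satisfies
`u2 ≤ cosh(φ_a* g*(K)/σ)/min(k_d, k_d^r)`. -/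
theorem stmt_19 (P : BiofilmParams) (U : ℝ)
    (hdose : Real.cosh (Real.sqrt (max (P.νs / P.Ls) (max (P.νp / P.Lp) (P.νr / P.Lr)) / P.DA)
        * (P.fs P.K + P.fr P.K) / P.σ) / min P.kd P.kdr ≤ U) :
    ∀ L : ℝ, 0 < L →
      ¬ ∃ Bs Bp Br Bd A C v : ℝ → ℝ,
        IsSteadyState P L U Bs Bp Br Bd A C v ∧ NontrivialState L Bs Bp Br := by
  rintro L hL ⟨Bs, Bp, Br, Bd, A, C, v, ss, -⟩
  set α := max (P.νs / P.Ls) (max (P.νp / P.Lp) (P.νr / P.Lr))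
  set φ := Real.sqrt (α / P.DA)
  set m := min P.kd P.kdr
  have hα : 0 < α := (div_pos P.hνs P.hLs).trans_le (le_max_left _ _)
  have hφ : 0 < φ := Real.sqrt_pos.2 (div_pos hα P.hDA)
  have hφ2 : φ ^ 2 = α / P.DA := Real.sq_sqrt (div_pos hα P.hDA).le
  have hm : 0 < m := lt_min P.hkd P.hkdr
  have hU : 0 < U := (div_pos (Real.cosh_pos _) hm).trans_le hdose
  have hA := ss.div_cosh_le_A hφ.ne' hU.le (hφ2 ▸ ss.deriv_deriv_A_le)
  have hthin := ss.L_le_div_σ hL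
  have hcosh : Real.cosh (φ * L) ≤ Real.cosh (φ * (P.fs P.K + P.fr P.K) / P.σ) := by
    rw [Real.cosh_le_cosh, mul_div_assoc, abs_of_nonneg (by positivity),
      abs_of_nonneg (mul_nonneg hφ.le (hL.le.trans hthin))]
    exact mul_le_mul_of_nonneg_left hthin hφ.le
  have hmA : ∀ x ∈ Icc 0 L, 1 ≤ m * A x := fun x hx => by
    have h1 := (div_le_iff₀ hm).1 hdose
    have h2 := (div_le_div_of_nonneg_left hU.le (Real.cosh_pos _) hcosh).trans (hA x hx)
    rw [div_le_iff₀ (Real.cosh_pos _)] at h2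
    nlinarith [Real.cosh_pos (φ * (P.fs P.K + P.fr P.K) / P.σ)]
  refine ss.false_of_killing hL fun x hx => ?_
  have hx' := Ioo_subset_Icc_self hx
  have hAx := ss.nonneg_A x hx'
  exact ⟨(hmA x hx').trans (mul_le_mul_of_nonneg_right (min_le_left _ _) hAx),
    (hmA x hx').trans (mul_le_mul_of_nonneg_right (min_le_right _ _) hAx)⟩
end
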